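/- Let ρ ∈ (0,1) and A₂(ρ) = [[-ρ², ρ√(2(1-ρ²)), 1-ρ²],[ρ√(2(1-ρ²)), 2ρ²-1, ρ√(2(1-ρ²))],[1-ρ², ρ√(2(1-ρ²)), -ρ²]]. For any φ₁, φ₃ ∈ ℂ, the constant function Ψ(x) = (φ₁, -(√(1-ρ²)/(√2·ρ))(φ₁+φ₃), φ₃) satisfies U_{A₂(ρ)}Ψ = -Ψ, and the resulting stationary measure is μ(x) = ((1+ρ²)/(2ρ²))(|φ₁|² + |φ₃|²) + ((1-ρ²)/ρ²)·Re(φ₁·conj(φ₃)), which is uniform on ℤ. -/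

import Mathlib

open Complex Matrix Finset

noncomputable def walk (A : Matrix (Fin 3) (Fin 3) ℂ) (Ψ : ℤ → Fin 3 → ℂ) : ℤ → Fin 3 → ℂ :=
  fun x => ![∑ j, A 0 j * Ψ (x + 1) j, ∑ j, A 1 j * Ψ x j, ∑ j, A 2 j * Ψ (x - 1) j]

noncomputable def A₂ (ρ : ℝ) : Matrix (Fin 3) (Fin 3) ℂ :=
  !![(-ρ ^ 2 : ℝ), (ρ * Real.sqrt (2 * (1 - ρ ^ 2)) : ℝ), ((1 - ρ ^ 2 : ℝ) : ℂ);
    (ρ * Real.sqrt (2 * (1 - ρ ^ 2)) : ℝ), ((2 * ρ ^ 2 - 1 : ℝ) : ℂ), (ρ * Real.sqrt (2 * (1 - ρ ^ 2)) : ℝ);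
    ((1 - ρ ^ 2 : ℝ) : ℂ), (ρ * Real.sqrt (2 * (1 - ρ ^ 2)) : ℝ), (-ρ ^ 2 : ℝ)]

/-!
A constant amplitude `Ψ ≡ v` is mapped by the walk to the constant `A v`, so it suffices that
`v = (φ₁, -κ (φ₁ + φ₃), φ₃)` with `κ = √(1 - ρ²) / (√2 ρ)` is a `-1`-eigenvector of `A₂(ρ)`.
This comes down to two identities: the off-diagonal entry `ρ √(2(1 - ρ²))` equals `2ρ²κ`, and
`2ρ²κ² = 1 - ρ²`. The measure `‖v‖²` is constant, and expanding `‖φ₁ + φ₃‖²` gives its value.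
-/

theorem walk_const (A : Matrix (Fin 3) (Fin 3) ℂ) (v : Fin 3 → ℂ) :
    walk A (fun _ => v) = fun _ => A *ᵥ v := by
  funext x i
  fin_cases i <;> rfl

noncomputable def A₂.eigenCoeff (ρ : ℝ) : ℝ := Real.sqrt (1 - ρ ^ 2) / (Real.sqrt 2 * ρ)

def typeOneVector (κ : ℝ) (φ₁ φ₃ : ℂ) : Fin 3 → ℂ := ![φ₁, -(κ : ℂ) * (φ₁ + φ₃), φ₃]

theorem A₂.offDiag_eq_eigenCoeff {ρ : ℝ} (hρ : ρ ≠ 0) :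
    ρ * Real.sqrt (2 * (1 - ρ ^ 2)) = 2 * ρ ^ 2 * A₂.eigenCoeff ρ := by
  have h2 : Real.sqrt 2 ^ 2 = 2 := Real.sq_sqrt zero_le_two
  rw [A₂.eigenCoeff, Real.sqrt_mul zero_le_two]
  field_simp
  linear_combination Real.sqrt (1 - ρ ^ 2) * h2

theorem A₂.eigenCoeff_sq {ρ : ℝ} (hρ : ρ ^ 2 ≤ 1) :
    A₂.eigenCoeff ρ ^ 2 = (1 - ρ ^ 2) / (2 * ρ ^ 2) := by
  rw [A₂.eigenCoeff, div_pow, mul_pow, Real.sq_sqrt (by linarith), Real.sq_sqrt zero_le_two]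

theorem A₂_mulVec_typeOneVector {ρ : ℝ} (hρ0 : ρ ≠ 0) (hρ1 : ρ ^ 2 ≤ 1) (φ₁ φ₃ : ℂ) :
    A₂ ρ *ᵥ typeOneVector (A₂.eigenCoeff ρ) φ₁ φ₃
      = -typeOneVector (A₂.eigenCoeff ρ) φ₁ φ₃ := by
  set κ := A₂.eigenCoeff ρ
  have hs : ((ρ * Real.sqrt (2 * (1 - ρ ^ 2)) : ℝ) : ℂ) = 2 * (ρ : ℂ) ^ 2 * κ := by
    exact_mod_cast A₂.offDiag_eq_eigenCoeff hρ0
  have hκ : (κ : ℂ) ^ 2 * (2 * (ρ : ℂ) ^ 2) = 1 - (ρ : ℂ) ^ 2 := by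
    have h := A₂.eigenCoeff_sq hρ1
    rw [eq_div_iff (by positivity)] at h
    exact_mod_cast h
  unfold A₂
  rw [hs]
  funext i
  fin_cases i <;>
    simp only [mulVec, dotProduct, typeOneVector, Fin.sum_univ_three, Pi.neg_apply, of_apply,
      cons_val', cons_val_fin_one, cons_val_zero, cons_val_one, Matrix.cons_val, Fin.zero_eta,
      Fin.mk_one, Fin.reduceFinMk, Fin.isValue, ofReal_neg, ofReal_pow, ofReal_sub, ofReal_one,
      ofReal_mul, ofReal_ofNat]
  · linear_combination -(φ₁ + φ₃) * hκ
  · ring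
  · linear_combination -(φ₁ + φ₃) * hκ

theorem sum_norm_sq_typeOneVector (κ : ℝ) (φ₁ φ₃ : ℂ) :
    ∑ i, ‖typeOneVector κ φ₁ φ₃ i‖ ^ 2
      = (1 + κ ^ 2) * (‖φ₁‖ ^ 2 + ‖φ₃‖ ^ 2) + 2 * κ ^ 2 * (φ₁ * (starRingEnd ℂ) φ₃).re := by
  have hadd : ‖φ₁ + φ₃‖ ^ 2 = ‖φ₁‖ ^ 2 + ‖φ₃‖ ^ 2 + 2 * (φ₁ * (starRingEnd ℂ) φ₃).re := by
    simpa only [normSq_eq_norm_sq] using normSq_add φ₁ φ₃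
  simp only [typeOneVector, Fin.sum_univ_three, cons_val_zero, cons_val_one, cons_val_two,
    head_cons, tail_cons, norm_mul, norm_neg, norm_real, Real.norm_eq_abs, mul_pow, sq_abs, hadd]
  ring

theorem A₂_type1_stationary (ρ : ℝ) (hρ : ρ ∈ Set.Ioo (0 : ℝ) 1) (φ₁ φ₃ : ℂ)
    (Ψ : ℤ → Fin 3 → ℂ)
    (hΨ : Ψ = fun _ => ![φ₁,
      -((Real.sqrt (1 - ρ ^ 2) / (Real.sqrt 2 * ρ) : ℝ) : ℂ) * (φ₁ + φ₃), φ₃])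
    (μ : ℤ → ℝ) (hμ : μ = fun x => ∑ i, ‖Ψ x i‖ ^ 2) :
    (walk (A₂ ρ) Ψ = fun x i => (-1 : ℂ) * Ψ x i) ∧
    (∀ x : ℤ, μ x = (1 + ρ ^ 2) / (2 * ρ ^ 2) * (‖φ₁‖ ^ 2 + ‖φ₃‖ ^ 2)
      + (1 - ρ ^ 2) / ρ ^ 2 * (φ₁ * (starRingEnd ℂ) φ₃).re) ∧
    (∀ x y : ℤ, μ x = μ y) := by
  have hρ0 : ρ ≠ 0 := hρ.1.ne'
  have hρsq : ρ ^ 2 ≤ 1 := by nlinarith [hρ.1, hρ.2]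
  replace hΨ : Ψ = fun _ => typeOneVector (A₂.eigenCoeff ρ) φ₁ φ₃ := hΨ
  subst hΨ hμ
  refine ⟨?_, fun _ => ?_, fun _ _ => rfl⟩
  · rw [walk_const, A₂_mulVec_typeOneVector hρ0 hρsq]
    funext x i
    exact neg_eq_neg_one_mul _
  · beta_reduce
    rw [sum_norm_sq_typeOneVector, A₂.eigenCoeff_sq hρsq]
    field_simp
    ring
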